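/- Let m ≥ 2 be an integer, c ∈ ℝ, and p̂(n) = (log n + c)/n (considered for n large enough that p̂(n) ∈ [0,1]). Then there exists a constant C > 0 such that the conditional probability P( exp(B_m(n, p̂(n))) ≤ C·n·(log n)³ | every matrix of B_m(n, p̂(n)) is NZ and B_m(n, p̂(n)) is primitive ) tends to 1 as n → ∞. -/

import Mathlib

open Matrix Filter

/-- The 0/1 matrix (over `ℕ`) associated to a Boolean matrix of entries. -/
def toMat {n : ℕ} (b : Fin n → Fin n → Bool) : Matrix (Fin n) (Fin n) ℕ :=
  Matrix.of fun i j => if b i j then 1 else 0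

open Classical in
/-- The probability that the random set `B_m(n, p)` of `m` independent random `n × n`
binary matrices, whose `m · n²` entries are i.i.d. Bernoulli(`p`), satisfies `E`. -/
noncomputable def bernoulliProb (n m : ℕ) (p : ℝ)
    (E : (Fin m → Matrix (Fin n) (Fin n) ℕ) → Prop) : ℝ :=
  ∑ b : Fin m → Fin n → Fin n → Bool,
    if E (fun k => toMat (b k)) then
      ∏ k : Fin m, ∏ i : Fin n, ∏ j : Fin n, (if b k i j then p else 1 - p)
    else 0

/-- A set `{M 0, ..., M (m-1)}` of `n × n` matrices over `ℕ` is primitive if some nonempty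
product of its elements (repetitions allowed) has all entries positive. -/
def IsPrimitive {n m : ℕ} (M : Fin m → Matrix (Fin n) (Fin n) ℕ) : Prop :=
  ∃ w : List (Fin m), w ≠ [] ∧ ∀ i j, 0 < (w.map M).prod i j

/-- A matrix is NZ if every row and every column contains a positive entry. -/
def IsNZ {n : ℕ} (A : Matrix (Fin n) (Fin n) ℕ) : Prop :=
  (∀ i, ∃ j, 0 < A i j) ∧ (∀ j, ∃ i, 0 < A i j)

/-!
Only the first matrix `A` of the set is used. Call `S` a *small trap* of `A` if
`1 ≤ |S| ≤ n/2`, no edge of `A` leaves `S`, and every vertex of `S` has an out-neighbour.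
For an NZ matrix with a loop, if neither `A` nor `Aᵀ` has a small trap then every nonempty
out-closed set is everything, so `A^(2n) > 0` and the exponent is at most `2n`.
For `p = (log n + c)/n` the loop is missing with probability `(1-p)^n ≤ e^{-c}/n`, and a union
bound over `S` gives `P(small trap) ≤ ∑ₖ C(n,k) (k p e^{-np/2})^k = O(log n / √n)`.
By Harris' inequality the conditioning event "all matrices are NZ" has probability at least
`(1 - e^{-c}/n)^{2nm} → e^{-2m e^{-c}} > 0`, so these failures remain negligible after
conditioning.
-/

open Finset Topology

section WeightedProbability

open scoped Classical

variable {X : Type*} {w : X → ℝ} {E F : X → Prop}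

def piWeight {α : Type*} [Fintype α] (w : X → ℝ) (b : α → X) : ℝ := ∏ a, w (b a)

lemma piWeight_nonneg {α : Type*} [Fintype α] (hw : ∀ x, 0 ≤ w x) (b : α → X) :
    0 ≤ piWeight w b :=
  prod_nonneg fun a _ => hw (b a)

lemma piWeight_mul_le [Lattice X] {α : Type*} [Fintype α] (hw0 : ∀ x, 0 ≤ w x)
    (hw : ∀ a b, w a * w b ≤ w (a ⊓ b) * w (a ⊔ b)) (a b : α → X) :
    piWeight w a * piWeight w b ≤ piWeight w (a ⊓ b) * piWeight w (a ⊔ b) := by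
  simp only [piWeight, ← prod_mul_distrib]
  exact prod_le_prod (fun i _ => mul_nonneg (hw0 _) (hw0 _)) fun i _ => hw (a i) (b i)

variable [Fintype X]

noncomputable def prob (w : X → ℝ) (E : X → Prop) : ℝ :=
  ∑ x, if E x then w x else 0

lemma prob_mono (hw : ∀ x, 0 ≤ w x) (h : ∀ x, E x → F x) : prob w E ≤ prob w F :=
  sum_le_sum fun x _ => by
    by_cases hE : E x
    · simp [hE, h x hE]
    · rw [if_neg hE]
      exact ite_nonneg (hw x) le_rfl

lemma prob_congr (h : ∀ x, E x ↔ F x) : prob w E = prob w F := by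
  obtain rfl : E = F := funext fun x => propext (h x)
  rfl

lemma prob_true : prob w (fun _ => True) = ∑ x, w x := by
  simp [prob]

lemma prob_add_prob_not : prob w E + prob w (fun x => ¬E x) = ∑ x, w x := by
  rw [prob, prob, ← sum_add_distrib]
  exact sum_congr rfl fun x _ => by by_cases h : E x <;> simp [h]

lemma prob_and_not (h : ∀ x, F x → E x) :
    prob w (fun x => E x ∧ ¬F x) = prob w E - prob w F := by
  rw [eq_sub_iff_add_eq, prob, prob, prob, ← sum_add_distrib]
  refine sum_congr rfl fun x _ => ?_
  by_cases hF : F x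
  · simp [hF, h x hF]
  · by_cases hE : E x <;> simp [hF, hE]

lemma prob_or_le (hw : ∀ x, 0 ≤ w x) :
    prob w (fun x => E x ∨ F x) ≤ prob w E + prob w F := by
  rw [prob, prob, prob, ← sum_add_distrib]
  refine sum_le_sum fun x _ => ?_
  by_cases hE : E x <;> by_cases hF : F x <;> simp [hE, hF, hw x]

lemma prob_exists_le {ι : Type*} [Fintype ι] (hw : ∀ x, 0 ≤ w x) (E : ι → X → Prop) :
    prob w (fun x => ∃ i, E i x) ≤ ∑ i, prob w (E i) := by
  calc prob w (fun x => ∃ i, E i x) ≤ ∑ x, ∑ i, if E i x then w x else 0 := by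
        refine sum_le_sum fun x _ => ?_
        split_ifs with h
        · obtain ⟨i, hi⟩ := h
          calc w x = if E i x then w x else 0 := by simp [hi]
            _ ≤ ∑ j, if E j x then w x else 0 :=
              single_le_sum (f := fun j => if E j x then w x else 0)
                (fun j _ => ite_nonneg (hw x) le_rfl) (mem_univ i)
        · exact sum_nonneg fun j _ => ite_nonneg (hw x) le_rfl
    _ = ∑ i, prob w (E i) := sum_comm

section Product

variable {α : Type*} [Fintype α] [DecidableEq α]

lemma prob_piWeight_forall (Q : α → X → Prop) :
    prob (piWeight w) (fun b => ∀ a, Q a (b a)) = ∏ a, prob w (Q a) := by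
  simp only [prob, piWeight, Fintype.prod_sum, Fintype.prod_ite_zero]
  convert rfl

lemma sum_piWeight (hw : ∑ x, w x = 1) : ∑ b : α → X, piWeight w b = 1 := by
  have h := prob_piWeight_forall (w := w) (fun (_ : α) (_ : X) => True)
  simp only [implies_true, prob_true, hw, prod_const_one] at h
  exact h

lemma prob_piWeight_forall_mem (hw : ∑ x, w x = 1) (s : Finset α) (Q : α → X → Prop) :
    prob (piWeight w) (fun b => ∀ a ∈ s, Q a (b a)) = ∏ a ∈ s, prob w (Q a) := by
  have h := prob_piWeight_forall (w := w) (fun a x => a ∈ s → Q a x)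
  rw [h, ← prod_subset (subset_univ s) (f := fun a => prob w fun x => a ∈ s → Q a x)
    fun a _ ha => by simp [ha, prob_true, hw]]
  exact prod_congr rfl fun a ha => by simp [ha]

lemma prob_piWeight_apply (hw : ∑ x, w x = 1) (a : α) (E : X → Prop) :
    prob (piWeight w) (fun b => E (b a)) = prob w E := by
  simpa using prob_piWeight_forall_mem hw {a} (fun _ => E)

lemma prob_transpose {β : Type*} [Fintype β] [DecidableEq β] (E : (β → α → X) → Prop) :
    prob (piWeight (piWeight w)) (fun g : α → β → X => E (fun j i => g i j)) =
      prob (piWeight (piWeight w)) E := by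
  refine Fintype.sum_equiv (Equiv.piComm _) _ _ fun g => ?_
  exact if_congr Iff.rfl Finset.prod_comm rfl

end Product

/-- **Harris' inequality**. -/
lemma prob_mul_prob_le_prob_and [DistribLattice X] (hw0 : ∀ x, 0 ≤ w x) (hw1 : ∑ x, w x = 1)
    (hw : ∀ a b, w a * w b ≤ w (a ⊓ b) * w (a ⊔ b)) (hE : Monotone E) (hF : Monotone F) :
    prob w E * prob w F ≤ prob w (fun x => E x ∧ F x) := by
  have indicator_mono : ∀ {G : X → Prop}, Monotone G →
      Monotone fun x => if G x then (1 : ℝ) else 0 := fun {G} hG a b hab => by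
    by_cases ha : G a
    · simp [ha, hG hab ha]
    · by_cases hb : G b <;> simp [ha, hb]
  have key := fkg (μ := w) (f := fun x => if E x then (1 : ℝ) else 0)
    (g := fun x => if F x then 1 else 0) hw0 (fun x => ite_nonneg zero_le_one le_rfl)
    (fun x => ite_nonneg zero_le_one le_rfl)
    (indicator_mono hE) (indicator_mono hF) hw
  simp only [hw1, one_mul, mul_ite, mul_one, mul_zero] at key
  refine key.trans_eq (sum_congr rfl fun x _ => ?_)
  by_cases hE : E x <;> by_cases hF : F x <;> simp [hE, hF]

end WeightedProbability

section Bernoulli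

variable {p : ℝ}

lemma one_sub_pow_le_exp (h1 : p ≤ 1) (k : ℕ) : (1 - p) ^ k ≤ Real.exp (-(k * p)) := by
  calc (1 - p) ^ k ≤ Real.exp (-p) ^ k :=
        pow_le_pow_left₀ (by linarith) (by linarith [Real.add_one_le_exp (-p)]) _
    _ = Real.exp (-(k * p)) := by rw [← Real.exp_nat_mul]; ring_nf

def bernoulliWeight (p : ℝ) (x : Bool) : ℝ := if x then p else 1 - p

lemma bernoulliWeight_nonneg (h0 : 0 ≤ p) (h1 : p ≤ 1) (x : Bool) :
    0 ≤ bernoulliWeight p x := by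
  cases x <;> simp [bernoulliWeight, h0, h1]

lemma sum_bernoulliWeight : ∑ x, bernoulliWeight p x = 1 := by
  simp [bernoulliWeight]

lemma bernoulliWeight_mul_bernoulliWeight (a b : Bool) :
    bernoulliWeight p a * bernoulliWeight p b =
      bernoulliWeight p (a ⊓ b) * bernoulliWeight p (a ⊔ b) := by
  cases a <;> cases b <;> simp [bernoulliWeight, mul_comm]

variable {β : Type*} [Fintype β] [DecidableEq β]

lemma prob_forall_false (S : Finset β) :
    prob (piWeight (bernoulliWeight p)) (fun r => ∀ j ∈ S, r j = false) = (1 - p) ^ S.card := by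
  rw [prob_piWeight_forall_mem sum_bernoulliWeight S fun _ x => x = false]
  simp [prob, bernoulliWeight]

lemma prob_exists_true :
    prob (piWeight (bernoulliWeight p)) (fun r : β → Bool => ∃ j, r j = true) =
      1 - (1 - p) ^ Fintype.card β := by
  have h := prob_add_prob_not (w := piWeight (bernoulliWeight p))
    (E := fun r : β → Bool => ∀ j ∈ univ, r j = false)
  rw [prob_forall_false, sum_piWeight sum_bernoulliWeight, card_univ] at h
  rw [prob_congr (F := fun r : β → Bool => ∃ j, r j = true) fun r => by simp] at h
  linarith

end Bernoulli

section RandomMatrix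

variable {n : ℕ} {p : ℝ}

lemma toMat_pos_iff (g : Fin n → Fin n → Bool) (i j : Fin n) :
    0 < toMat g i j ↔ g i j = true := by
  cases h : g i j <;> simp [toMat, h]

lemma toMat_eq_zero_iff (g : Fin n → Fin n → Bool) (i j : Fin n) :
    toMat g i j = 0 ↔ g i j = false := by
  cases h : g i j <;> simp [toMat, h]

lemma transpose_toMat (g : Fin n → Fin n → Bool) : (toMat g)ᵀ = toMat fun i j => g j i := by
  ext i j
  simp [toMat]

lemma isNZ_toMat_iff (g : Fin n → Fin n → Bool) :
    IsNZ (toMat g) ↔ (∀ i, ∃ j, g i j = true) ∧ ∀ j, ∃ i, g i j = true := by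
  simp [IsNZ, toMat_pos_iff]

lemma prob_rows_nonzero :
    prob (piWeight (piWeight (bernoulliWeight p))) (fun g : Fin n → Fin n → Bool =>
      ∀ i, ∃ j, g i j = true) = (1 - (1 - p) ^ n) ^ n := by
  rw [prob_piWeight_forall fun (_ : Fin n) (r : Fin n → Bool) => ∃ j, r j = true]
  simp [prob_exists_true]

lemma prob_cols_nonzero :
    prob (piWeight (piWeight (bernoulliWeight p))) (fun g : Fin n → Fin n → Bool =>
      ∀ j, ∃ i, g i j = true) = (1 - (1 - p) ^ n) ^ n := by
  rw [← prob_rows_nonzero]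
  exact prob_transpose fun g : Fin n → Fin n → Bool => ∀ i, ∃ j, g i j = true

lemma pow_le_prob_isNZ (h0 : 0 ≤ p) (h1 : p ≤ 1) :
    (1 - (1 - p) ^ n) ^ (2 * n) ≤
      prob (piWeight (piWeight (bernoulliWeight p))) fun g : Fin n → Fin n → Bool =>
        IsNZ (toMat g) := by
  have hw0 := bernoulliWeight_nonneg h0 h1
  have harris := prob_mul_prob_le_prob_and
    (piWeight_nonneg (piWeight_nonneg hw0)) (sum_piWeight (sum_piWeight sum_bernoulliWeight))
    (piWeight_mul_le (piWeight_nonneg hw0) (piWeight_mul_le hw0 fun a b =>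
      (bernoulliWeight_mul_bernoulliWeight a b).le))
    (E := fun g : Fin n → Fin n → Bool => ∀ i, ∃ j, g i j = true)
    (F := fun g => ∀ j, ∃ i, g i j = true)
    (fun g g' hle h i => (h i).imp fun j hj => Bool.le_iff_imp.1 (hle i j) hj)
    (fun g g' hle h j => (h j).imp fun i hi => Bool.le_iff_imp.1 (hle i j) hi)
  rw [prob_rows_nonzero, prob_cols_nonzero, ← pow_add, ← two_mul] at harris
  exact harris.trans_eq (prob_congr fun g => (isNZ_toMat_iff g).symm)

end RandomMatrix

section Traps

variable {n : ℕ} {p : ℝ}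

def IsTrap {V : Type*} (A : Matrix V V ℕ) (S : Finset V) : Prop :=
  (∀ v ∈ S, ∀ u ∉ S, A v u = 0) ∧ ∀ v ∈ S, ∃ u ∈ S, 0 < A v u

def HasSmallTrap (A : Matrix (Fin n) (Fin n) ℕ) : Prop :=
  ∃ S : Finset (Fin n), S.Nonempty ∧ 2 * S.card ≤ n ∧ IsTrap A S

lemma isTrap_toMat_iff (g : Fin n → Fin n → Bool) (S : Finset (Fin n)) :
    IsTrap (toMat g) S ↔
      ∀ v ∈ S, (∀ u ∈ Sᶜ, g v u = false) ∧ ¬∀ u ∈ univ, g v u = false := by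
  simp only [IsTrap, toMat_eq_zero_iff, toMat_pos_iff, mem_compl, mem_univ, true_implies,
    not_forall, Bool.not_eq_false]
  constructor
  · rintro ⟨hout, hin⟩ v hv
    obtain ⟨u, -, hu⟩ := hin v hv
    exact ⟨hout v hv, u, hu⟩
  · intro h
    refine ⟨fun v hv => (h v hv).1, fun v hv => ?_⟩
    obtain ⟨hout, u, hu⟩ := h v hv
    exact ⟨u, by_contra fun huS => by simp [hout u huS] at hu, hu⟩

lemma prob_isTrap (S : Finset (Fin n)) :
    prob (piWeight (piWeight (bernoulliWeight p))) (fun g => IsTrap (toMat g) S) =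
      ((1 - p) ^ (n - S.card) - (1 - p) ^ n) ^ S.card := by
  rw [prob_congr (isTrap_toMat_iff · S),
    prob_piWeight_forall_mem (sum_piWeight sum_bernoulliWeight) S
      fun _ r => (∀ u ∈ Sᶜ, r u = false) ∧ ¬∀ u ∈ univ, r u = false]
  rw [prod_congr rfl fun _ _ => prob_and_not fun r h u _ => h u (mem_univ u), prod_const,
    prob_forall_false, prob_forall_false, card_compl, card_univ, Fintype.card_fin]

lemma one_sub_pow_sub_pow_le (h0 : 0 ≤ p) (h1 : p ≤ 1) {k : ℕ} (hk : 2 * k ≤ n) :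
    (1 - p) ^ (n - k) - (1 - p) ^ n ≤ k * p * Real.exp (-(n * p / 2)) := by
  have hq : 0 ≤ 1 - p := by linarith
  have hsplit : (1 - p) ^ (n - k) - (1 - p) ^ n = (1 - p) ^ (n - k) * (1 - (1 - p) ^ k) := by
    rw [mul_sub, mul_one, ← pow_add, Nat.sub_add_cancel (by omega)]
  have hfar : (1 - p) ^ (n - k) ≤ Real.exp (-(n * p / 2)) := by
    refine (one_sub_pow_le_exp h1 _).trans (Real.exp_le_exp.2 ?_)
    have : (n : ℝ) ≤ 2 * ((n - k : ℕ) : ℝ) := by norm_cast; omega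
    nlinarith
  have hnear : 1 - (1 - p) ^ k ≤ k * p := by
    have bernoulli := one_add_mul_le_pow (a := -p) (by linarith) k
    rw [← sub_eq_add_neg] at bernoulli
    linarith
  rw [hsplit, mul_comm]
  exact mul_le_mul hnear hfar (pow_nonneg hq _) (by positivity)

lemma choose_mul_pow_le (n k : ℕ) {x : ℝ} (hx : 0 ≤ x) :
    n.choose k * (k * x) ^ k ≤ (Real.exp 1 * n * x) ^ k := by
  have hchoose : (n.choose k : ℝ) ≤ n ^ k / k.factorial := Nat.choose_le_pow_div k n
  have hfact : (k : ℝ) ^ k / k.factorial ≤ Real.exp 1 ^ k := by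
    simpa [← Real.exp_nat_mul] using Real.pow_div_factorial_le_exp (k : ℝ) (Nat.cast_nonneg k) k
  have hkf : (0 : ℝ) < k.factorial := by positivity
  calc n.choose k * (k * x) ^ k ≤ n ^ k / k.factorial * (k * x) ^ k := by gcongr
    _ = (k : ℝ) ^ k / k.factorial * (n * x) ^ k := by ring
    _ ≤ Real.exp 1 ^ k * (n * x) ^ k := by gcongr
    _ = (Real.exp 1 * n * x) ^ k := by ring

/-- The ratio of the geometric series that bounds the probability of a small trap:
`C(n,k) · (k p e^{-np/2})^k ≤ trapRate (n p) ^ k`. -/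
noncomputable def trapRate (y : ℝ) : ℝ := Real.exp 1 * y * Real.exp (-(y / 2))

lemma prob_isTrap_le (h0 : 0 ≤ p) (h1 : p ≤ 1) {S : Finset (Fin n)} (hS : 2 * S.card ≤ n) :
    prob (piWeight (piWeight (bernoulliWeight p))) (fun g => IsTrap (toMat g) S) ≤
      (S.card * p * Real.exp (-(n * p / 2))) ^ S.card := by
  rw [prob_isTrap]
  refine pow_le_pow_left₀ (sub_nonneg.2 ?_) (one_sub_pow_sub_pow_le h0 h1 hS) _
  exact pow_le_pow_of_le_one (by linarith) (by linarith) (Nat.sub_le _ _)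

lemma sum_range_pow_succ_le {β : ℝ} (hβ0 : 0 ≤ β) (hβ : β ≤ 1 / 2) (n : ℕ) :
    ∑ k ∈ range n, β ^ (k + 1) ≤ 2 * β := by
  have hgeom := geom_sum_Ico_le_of_lt_one (m := 0) (n := n) hβ0 (by linarith)
  rw [pow_zero, ← range_eq_Ico, le_div_iff₀ (by linarith)] at hgeom
  simp only [pow_succ, ← sum_mul]
  nlinarith

lemma prob_hasSmallTrap_le (h0 : 0 ≤ p) (h1 : p ≤ 1) (hβ : trapRate (n * p) ≤ 1 / 2) :
    prob (piWeight (piWeight (bernoulliWeight p)))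
      (fun g : Fin n → Fin n → Bool => HasSmallTrap (toMat g)) ≤ 2 * trapRate (n * p) := by
  set f : ℕ → ℝ := fun k =>
    if 0 < k ∧ 2 * k ≤ n then (k * p * Real.exp (-(n * p / 2))) ^ k else 0
  have hw0 : ∀ g : Fin n → Fin n → Bool, 0 ≤ piWeight (piWeight (bernoulliWeight p)) g :=
    piWeight_nonneg (piWeight_nonneg (bernoulliWeight_nonneg h0 h1))
  calc prob (piWeight (piWeight (bernoulliWeight p)))
        (fun g : Fin n → Fin n → Bool => HasSmallTrap (toMat g))
      ≤ ∑ S : Finset (Fin n), prob (piWeight (piWeight (bernoulliWeight p)))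
          (fun g => S.Nonempty ∧ 2 * S.card ≤ n ∧ IsTrap (toMat g) S) := prob_exists_le hw0 _
    _ ≤ ∑ S : Finset (Fin n), f S.card := by
        refine sum_le_sum fun S _ => ?_
        by_cases hS : S.Nonempty ∧ 2 * S.card ≤ n
        · rw [prob_congr (F := fun g => IsTrap (toMat g) S) (by simp [hS])]
          simpa [f, card_pos.2 hS.1, hS.2] using prob_isTrap_le h0 h1 hS.2
        · rw [prob_congr (F := fun _ => False) (by tauto)]
          simp [prob, f, card_pos, hS]
    _ = ∑ k ∈ range n, n.choose (k + 1) * f (k + 1) := by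
        rw [← powerset_univ, sum_powerset_apply_card, sum_range_succ']
        simp [f, nsmul_eq_mul]
    _ ≤ ∑ k ∈ range n, trapRate (n * p) ^ (k + 1) := by
        refine sum_le_sum fun k _ => ?_
        by_cases hk : 2 * (k + 1) ≤ n
        · simp only [f, hk, Nat.succ_pos, and_self, if_true]
          calc (n.choose (k + 1) : ℝ) * ((k + 1 : ℕ) * p * Real.exp (-(n * p / 2))) ^ (k + 1)
              = n.choose (k + 1) * ((k + 1 : ℕ) * (p * Real.exp (-(n * p / 2)))) ^ (k + 1) := by
                ring
            _ ≤ (Real.exp 1 * n * (p * Real.exp (-(n * p / 2)))) ^ (k + 1) :=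
                choose_mul_pow_le n (k + 1) (by positivity)
            _ = trapRate (n * p) ^ (k + 1) := by simp only [trapRate]; ring_nf
        · simp only [f, hk, and_false, if_false, mul_zero]
          exact pow_nonneg (by unfold trapRate; positivity) _
    _ ≤ 2 * trapRate (n * p) := sum_range_pow_succ_le (by unfold trapRate; positivity) hβ n

end Traps

section Reachability

variable {V : Type*} [Fintype V] {n : ℕ}

lemma Matrix.mul_apply_pos {A B : Matrix V V ℕ} {i l j : V} (hil : 0 < A i l) (hlj : 0 < B l j) :
    0 < (A * B) i j :=
  sum_pos' (fun _ _ => Nat.zero_le _) ⟨l, mem_univ l, Nat.mul_pos hil hlj⟩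

def IsOutClosed (A : Matrix V V ℕ) (S : Finset V) : Prop :=
  ∀ v ∈ S, ∀ u, 0 < A v u → u ∈ S

lemma eq_univ_of_monotone_of_stable {T : ℕ → Finset V} (hmono : Monotone T)
    (h0 : (T 0).Nonempty)
    (hstable : ∀ k, T (k + 1) = T k → T k = univ) : T (Fintype.card V) = univ := by
  have grow : ∀ k, T k = univ ∨ k + 1 ≤ (T k).card := by
    intro k
    induction k with
    | zero => exact Or.inr h0.card_pos
    | succ k ih =>
      by_cases hk : T (k + 1) = T k
      · exact Or.inl (hk.trans (hstable k hk))
      · have hle : T k ⊆ T (k + 1) := hmono (by omega)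
        refine ih.imp (fun h : T k = univ => eq_univ_of_forall fun x => hle (h ▸ mem_univ x))
          fun h => ?_
        have := card_lt_card (hle.ssubset_of_ne (Ne.symm hk))
        omega
  exact (grow _).resolve_right fun h => by linarith [card_le_univ (T (Fintype.card V))]

variable [DecidableEq V]

/-- With a loop at `v`, the sets of endpoints of walks of length `k` from `v` increase with `k`;
once they stop increasing they form an out-closed set. -/
lemma pow_card_apply_pos {A : Matrix V V ℕ} {v : V} (hv : 0 < A v v)
    (hA : ∀ S, v ∈ S → IsOutClosed A S → S = univ) (j : V) :
    0 < (A ^ Fintype.card V) v j := by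
  set T : ℕ → Finset V := fun k => univ.filter fun j => 0 < (A ^ k) v j
  have hmono : Monotone T := monotone_nat_of_le_succ fun k j hj => by
    simp only [T, mem_filter, mem_univ, true_and, pow_succ'] at hj ⊢
    exact Matrix.mul_apply_pos hv hj
  have hvT : v ∈ T 0 := by simp [T]
  have hT := eq_univ_of_monotone_of_stable hmono ⟨v, hvT⟩ fun k hk =>
    hA _ (hmono (Nat.zero_le k) hvT) fun u hu w huw => by
      rw [← hk]
      simp only [T, mem_filter, mem_univ, true_and, pow_succ] at hu ⊢
      exact Matrix.mul_apply_pos hu huw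
  have hj : j ∈ T (Fintype.card V) := hT ▸ mem_univ j
  simpa [T] using hj

lemma IsNZ.transpose {A : Matrix (Fin n) (Fin n) ℕ} (hA : IsNZ A) : IsNZ Aᵀ :=
  ⟨hA.2, hA.1⟩

/-- A nonempty out-closed set `S` is a trap of `A` when small; when large, `Sᶜ` is a trap
of `Aᵀ`. -/
lemma eq_univ_of_isOutClosed {A : Matrix (Fin n) (Fin n) ℕ} (hA : IsNZ A)
    (htrap : ¬HasSmallTrap A) (htrapT : ¬HasSmallTrap Aᵀ) {S : Finset (Fin n)} (hS : S.Nonempty)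
    (hcl : IsOutClosed A S) : S = univ := by
  by_contra hne
  by_cases hsmall : 2 * S.card ≤ n
  · refine htrap ⟨S, hS, hsmall, fun v hv u hu => ?_, fun v hv => ?_⟩
    · exact Nat.eq_zero_of_not_pos fun h => hu (hcl v hv u h)
    · obtain ⟨u, hu⟩ := hA.1 v
      exact ⟨u, hcl v hv u hu, hu⟩
  · have hSc : Sᶜ.Nonempty := by
      obtain ⟨x, hx⟩ := not_forall.1 fun h => hne (eq_univ_of_forall h)
      exact ⟨x, mem_compl.2 hx⟩
    refine htrapT ⟨Sᶜ, hSc, ?_, fun u hu v hv => ?_, fun u hu => ?_⟩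
    · have := card_compl_add_card S
      simp only [Fintype.card_fin] at this
      omega
    · rw [notMem_compl] at hv
      exact Nat.eq_zero_of_not_pos fun h => mem_compl.1 hu (hcl v hv u h)
    · obtain ⟨v, hv⟩ := hA.2 u
      exact ⟨v, mem_compl.2 fun hvS => mem_compl.1 hu (hcl v hvS u hv), hv⟩

theorem pow_two_mul_apply_pos {A : Matrix (Fin n) (Fin n) ℕ} (hA : IsNZ A) {v : Fin n}
    (hv : 0 < A v v) (htrap : ¬HasSmallTrap A) (htrapT : ¬HasSmallTrap Aᵀ) (i j : Fin n) :
    0 < (A ^ (2 * n)) i j := by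
  have hfrom : ∀ j, 0 < (A ^ n) v j := by
    simpa using pow_card_apply_pos hv fun S hS => eq_univ_of_isOutClosed hA htrap htrapT ⟨v, hS⟩
  have hto : ∀ i, 0 < (A ^ n) i v := by
    have := pow_card_apply_pos (A := Aᵀ) hv fun S hS =>
      eq_univ_of_isOutClosed hA.transpose htrapT (by rwa [transpose_transpose]) ⟨v, hS⟩
    simpa [← transpose_pow] using this
  rw [two_mul, pow_add]
  exact Matrix.mul_apply_pos (hto i) (hfrom j)

end Reachability

section RandomSet

variable {n m : ℕ} {p : ℝ}

def IsLoopedTrapFree (A : Matrix (Fin n) (Fin n) ℕ) : Prop :=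
  (∃ v, 0 < A v v) ∧ ¬HasSmallTrap A ∧ ¬HasSmallTrap Aᵀ

lemma prob_forall_diag_eq_false :
    prob (piWeight (piWeight (bernoulliWeight p)))
      (fun g : Fin n → Fin n → Bool => ∀ i, g i i = false) = (1 - p) ^ n := by
  rw [prob_piWeight_forall fun (i : Fin n) (r : Fin n → Bool) => r i = false]
  rw [prod_congr rfl fun i _ => prob_piWeight_apply sum_bernoulliWeight i (· = false)]
  simp [prob, bernoulliWeight]

lemma prob_not_isLoopedTrapFree_le (h0 : 0 ≤ p) (h1 : p ≤ 1)
    (hβ : trapRate (n * p) ≤ 1 / 2) :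
    prob (piWeight (piWeight (bernoulliWeight p)))
      (fun g : Fin n → Fin n → Bool => ¬IsLoopedTrapFree (toMat g)) ≤
        Real.exp (-(n * p)) + 4 * trapRate (n * p) := by
  have hw0 : ∀ g : Fin n → Fin n → Bool, 0 ≤ piWeight (piWeight (bernoulliWeight p)) g :=
    piWeight_nonneg (piWeight_nonneg (bernoulliWeight_nonneg h0 h1))
  have htrapT := prob_transpose (w := bernoulliWeight p)
    fun g : Fin n → Fin n → Bool => HasSmallTrap (toMat g)
  simp only [← transpose_toMat] at htrapT
  rw [prob_congr fun g => show ¬IsLoopedTrapFree (toMat g) ↔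
      (∀ i, g i i = false) ∨ HasSmallTrap (toMat g) ∨ HasSmallTrap (toMat g)ᵀ by
    simp [IsLoopedTrapFree, toMat_pos_iff, imp_iff_not_or]]
  refine (prob_or_le hw0).trans ?_
  have htraps := prob_or_le hw0 (E := fun g => HasSmallTrap (toMat g))
    (F := fun g => HasSmallTrap (toMat g)ᵀ)
  rw [prob_forall_diag_eq_false]
  linarith [prob_hasSmallTrap_le h0 h1 hβ, one_sub_pow_le_exp h1 n]

lemma bernoulliProb_eq_prob (E : (Fin m → Matrix (Fin n) (Fin n) ℕ) → Prop) :
    bernoulliProb n m p E = prob (piWeight (piWeight (piWeight (bernoulliWeight p))))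
      fun b => E fun k => toMat (b k) :=
  rfl

lemma bernoulliProb_mono (h0 : 0 ≤ p) (h1 : p ≤ 1)
    {E F : (Fin m → Matrix (Fin n) (Fin n) ℕ) → Prop}
    (h : ∀ M, E M → F M) : bernoulliProb n m p E ≤ bernoulliProb n m p F :=
  prob_mono (piWeight_nonneg (piWeight_nonneg (piWeight_nonneg (bernoulliWeight_nonneg h0 h1))))
    fun _ => h _

lemma bernoulliProb_or_le (h0 : 0 ≤ p) (h1 : p ≤ 1)
    {E F : (Fin m → Matrix (Fin n) (Fin n) ℕ) → Prop} :
    bernoulliProb n m p (fun M => E M ∨ F M) ≤ bernoulliProb n m p E + bernoulliProb n m p F :=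
  prob_or_le (piWeight_nonneg (piWeight_nonneg (piWeight_nonneg (bernoulliWeight_nonneg h0 h1))))

lemma bernoulliProb_apply (k : Fin m) (E : Matrix (Fin n) (Fin n) ℕ → Prop) :
    bernoulliProb n m p (fun M => E (M k)) =
      prob (piWeight (piWeight (bernoulliWeight p))) fun g => E (toMat g) :=
  prob_piWeight_apply (sum_piWeight (sum_piWeight sum_bernoulliWeight)) k fun g => E (toMat g)

lemma pow_le_bernoulliProb_isNZ (h0 : 0 ≤ p) (h1 : p ≤ 1) :
    (1 - (1 - p) ^ n) ^ (2 * n * m) ≤ bernoulliProb n m p fun M => ∀ k, IsNZ (M k) := by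
  rw [bernoulliProb_eq_prob, prob_piWeight_forall fun (_ : Fin m) g => IsNZ (toMat g), prod_const,
    card_univ, Fintype.card_fin, pow_mul]
  have : 0 ≤ 1 - (1 - p) ^ n := sub_nonneg.2 (pow_le_one₀ (by linarith) (by linarith))
  exact pow_le_pow_left₀ (by positivity) (pow_le_prob_isNZ h0 h1) m

lemma bernoulliProb_sub_le_of_isLoopedTrapFree (h0 : 0 ≤ p) (h1 : p ≤ 1)
    (hβ : trapRate (n * p) ≤ 1 / 2) (k₀ : Fin m)
    {G : (Fin m → Matrix (Fin n) (Fin n) ℕ) → Prop}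
    (hG : ∀ M, (∀ k, IsNZ (M k)) → IsLoopedTrapFree (M k₀) → G M) :
    bernoulliProb n m p (fun M => ∀ k, IsNZ (M k)) -
        (Real.exp (-(n * p)) + 4 * trapRate (n * p)) ≤
      bernoulliProb n m p fun M => (∀ k, IsNZ (M k)) ∧ G M := by
  have hcover := (bernoulliProb_mono h0 h1 (E := fun M => ∀ k, IsNZ (M k))
    (F := fun M => ((∀ k, IsNZ (M k)) ∧ G M) ∨ ¬IsLoopedTrapFree (M k₀))
    fun M hM => (em _).imp (fun h => ⟨hM, hG M hM h⟩) id).trans (bernoulliProb_or_le h0 h1)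
  rw [bernoulliProb_apply k₀ fun A => ¬IsLoopedTrapFree A] at hcover
  linarith [prob_not_isLoopedTrapFree_le h0 h1 hβ]

lemma exists_word_of_isLoopedTrapFree (hn : 0 < n) {M : Fin m → Matrix (Fin n) (Fin n) ℕ}
    {k₀ : Fin m} (hNZ : IsNZ (M k₀)) (hM : IsLoopedTrapFree (M k₀)) :
    ∃ w : List (Fin m), w ≠ [] ∧ w.length = 2 * n ∧ ∀ i j, 0 < (w.map M).prod i j := by
  obtain ⟨⟨v, hv⟩, htrap, htrapT⟩ := hM
  refine ⟨List.replicate (2 * n) k₀, by simp [hn.ne'], List.length_replicate, fun i j => ?_⟩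
  rw [List.map_replicate, List.prod_replicate]
  exact pow_two_mul_apply_pos hNZ hv htrap htrapT i j

lemma bernoulliProb_isNZ_sub_le (hm : 0 < m) (hn : 0 < n) (h0 : 0 ≤ p) (h1 : p ≤ 1)
    (hβ : trapRate (n * p) ≤ 1 / 2) {L : ℝ} (hL : 2 * n ≤ L) :
    bernoulliProb n m p (fun M => ∀ k, IsNZ (M k)) -
        (Real.exp (-(n * p)) + 4 * trapRate (n * p)) ≤
      bernoulliProb n m p fun M => (∀ k, IsNZ (M k)) ∧ ∃ w : List (Fin m), w ≠ [] ∧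
        (w.length : ℝ) ≤ L ∧ ∀ i j, 0 < (w.map M).prod i j :=
  bernoulliProb_sub_le_of_isLoopedTrapFree h0 h1 hβ ⟨0, hm⟩ fun M hM hgood => by
    obtain ⟨w, hw, hlen, hpos⟩ := exists_word_of_isLoopedTrapFree hn (hM _) hgood
    exact ⟨w, hw, by rw [hlen]; exact_mod_cast hL, hpos⟩

end RandomSet

lemma tendsto_div_of_sandwich {ι : Type*} {f : Filter ι} {a b d e l : ι → ℝ} {ℓ : ℝ}
    (hℓ : 0 < ℓ) (hl : Tendsto l f (𝓝 ℓ)) (he : Tendsto e f (𝓝 0))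
    (h : ∀ᶠ i in f, a i ≤ b i ∧ b i ≤ d i ∧ d i - e i ≤ a i ∧ l i ≤ d i) :
    Tendsto (fun i => a i / b i) f (𝓝 1) := by
  have hlow : Tendsto (fun i => 1 - |e i| * (2 / ℓ)) f (𝓝 1) := by
    simpa using ((he.abs.mul_const (2 / ℓ)).const_sub 1)
  have hbounds : ∀ᶠ i in f, 1 - |e i| * (2 / ℓ) ≤ a i / b i ∧ a i / b i ≤ 1 := by
    filter_upwards [h, hl.eventually (lt_mem_nhds (half_lt_self hℓ)),
      he.abs.eventually (gt_mem_nhds (by rw [abs_zero]; positivity : |(0 : ℝ)| < ℓ / 4))]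
      with i ⟨hab, hbd, hda, hld⟩ hlℓ heℓ
    have ha : 0 < a i := by linarith [le_abs_self (e i)]
    have hb : 0 < b i := ha.trans_le hab
    have hd : ℓ / 2 < d i := hlℓ.trans_le hld
    have hd0 : 0 < d i := by linarith
    refine ⟨?_, (div_le_one hb).2 hab⟩
    calc 1 - |e i| * (2 / ℓ) = 1 - |e i| / (ℓ / 2) := by field_simp
      _ ≤ 1 - e i / d i := by
          refine sub_le_sub_left ?_ 1
          calc e i / d i ≤ |e i| / d i := by gcongr; exact le_abs_self _
            _ ≤ |e i| / (ℓ / 2) := by gcongr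
      _ = (d i - e i) / d i := by rw [sub_div, div_self hd0.ne']
      _ ≤ a i / d i := by gcongr
      _ ≤ a i / b i := by gcongr
  exact tendsto_of_tendsto_of_tendsto_of_le_of_le' hlow tendsto_const_nhds
    (hbounds.mono fun _ h => h.1) (hbounds.mono fun _ h => h.2)

lemma tendsto_trapRate : Tendsto trapRate atTop (𝓝 0) := by
  have h := ((Real.tendsto_pow_mul_exp_neg_atTop_nhds_zero 1).comp
    (tendsto_id.atTop_div_const two_pos)).const_mul (2 * Real.exp 1)
  rw [mul_zero] at h
  refine h.congr fun y => ?_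
  simp only [trapRate, Function.comp, id, pow_one]
  ring

lemma tendsto_log_add_div (c : ℝ) :
    Tendsto (fun n : ℕ => (Real.log n + c) / n) atTop (𝓝 0) := by
  have hlog := Real.isLittleO_log_id_atTop.tendsto_div_nhds_zero.comp tendsto_natCast_atTop_atTop
  simpa [add_div] using hlog.add (tendsto_const_div_atTop_nhds_zero_nat c)

lemma tendsto_one_sub_exp_neg_pow (c : ℝ) (m : ℕ) :
    Tendsto (fun n : ℕ => (1 - Real.exp (-(Real.log n + c))) ^ (2 * n * m)) atTop
      (𝓝 (Real.exp (-Real.exp (-c)) ^ (2 * m))) := by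
  refine (((Real.tendsto_one_add_div_pow_exp (-Real.exp (-c))).pow (2 * m))).congr' ?_
  filter_upwards [eventually_gt_atTop 0] with n hn
  rw [neg_add, Real.exp_add, Real.exp_neg (Real.log n), Real.exp_log (by positivity), ← pow_mul]
  ring_nf

/-- Let `m ≥ 2`, `c ∈ ℝ` and `p̂ n = (log n + c)/n`.  There is a constant `C > 0` such
that the conditional probability that `exp(B_m(n, p̂ n)) ≤ C · n · (log n)³`, given that
every matrix of `B_m(n, p̂ n)` is NZ and the set is primitive, tends to `1` as `n → ∞`.
(The conditional probability is expressed as the quotient of the probability of the joint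
event by the probability of the conditioning event.) -/
theorem stmt5 (m : ℕ) (hm : 2 ≤ m) (c : ℝ) :
    ∃ C : ℝ, 0 < C ∧
      Tendsto (fun n : ℕ =>
        bernoulliProb n m ((Real.log n + c) / n)
          (fun M => (∀ k, IsNZ (M k)) ∧ ∃ w : List (Fin m), w ≠ [] ∧
            (w.length : ℝ) ≤ C * n * Real.log n ^ 3 ∧
            ∀ i j, 0 < (w.map M).prod i j) /
        bernoulliProb n m ((Real.log n + c) / n)
          (fun M => (∀ k, IsNZ (M k)) ∧ IsPrimitive M))
      atTop (nhds 1) := by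
  refine ⟨2, two_pos, ?_⟩
  have hlog := Real.tendsto_log_atTop.comp tendsto_natCast_atTop_atTop
  have hy : Tendsto (fun n : ℕ => Real.log n + c) atTop atTop :=
    tendsto_atTop_add_const_right _ c hlog
  have herr := (Real.tendsto_exp_neg_atTop_nhds_zero.add (tendsto_trapRate.const_mul 4)).comp hy
  rw [mul_zero, add_zero] at herr
  refine tendsto_div_of_sandwich (by positivity) (tendsto_one_sub_exp_neg_pow c m) herr
    (d := fun n => bernoulliProb n m ((Real.log n + c) / n) fun M => ∀ k, IsNZ (M k)) ?_
  filter_upwards [eventually_gt_atTop 0, hy.eventually_ge_atTop 0, hlog.eventually_ge_atTop 1,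
    (tendsto_log_add_div c).eventually (ge_mem_nhds zero_lt_one),
    (tendsto_trapRate.comp hy).eventually (ge_mem_nhds (by norm_num : (0 : ℝ) < 1 / 2))]
    with n hn hy0 hlog1 hp1 hβ
  have hnp : (n : ℝ) * ((Real.log n + c) / n) = Real.log n + c :=
    mul_div_cancel₀ _ (by positivity)
  have hp0 : 0 ≤ (Real.log n + c) / n := by positivity
  have hL : 2 * (n : ℝ) ≤ 2 * n * Real.log n ^ 3 :=
    le_mul_of_one_le_right (by positivity) (one_le_pow₀ hlog1)
  have hmain := bernoulliProb_isNZ_sub_le (show 0 < m by omega) hn hp0 hp1 (by rwa [hnp]) hL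
  have hq := one_sub_pow_le_exp hp1 n
  rw [hnp] at hmain hq
  refine ⟨bernoulliProb_mono hp0 hp1 fun M ⟨hNZ, w, hw, _, hpos⟩ => ⟨hNZ, w, hw, hpos⟩,
    bernoulliProb_mono hp0 hp1 fun M h => h.1, hmain, ?_⟩
  refine (pow_le_pow_left₀ ?_ (by linarith) _).trans (pow_le_bernoulliProb_isNZ hp0 hp1)
  exact sub_nonneg.2 (Real.exp_le_one_iff.2 (by linarith))
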